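/- Let q_0 ≠ 1 be a primitive l-th root of unity, let p be a positive integer, and let a_1, ..., a_p be integers with a_1 > 0 and a_1 + ... + a_p = n where l | n. Then the element A = ([n]/[a_1]) · F_q(a_1, ..., a_p) of ℂ(q) is regular at q = q_0, and its value at q_0 is 0 if some a_i is not divisible by l, and equals (n'/a'_1) · ∏_{i=1}^{p-1} C(a'_i + a'_{i+1} - 1, a'_{i+1}) if all a_i = l·a'_i are divisible by l, where n = l·n'. -/

import Mathlib

noncomputable section

/-- The `q`-integer `[m] = (q^m - 1)/(q - 1)` in `ℂ(q)`, allowing integer `m`. -/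
def qintZ (m : ℤ) : RatFunc ℂ := (RatFunc.X ^ m - 1) / (RatFunc.X - 1)

/-- The `q`-factorial `[n]!`. -/
def qfactF (n : ℕ) : RatFunc ℂ := ∏ k ∈ Finset.range n, qintZ (k + 1)

/-- The Gaussian binomial coefficient for integer arguments:
`qbinom(n, p) = 1` if `p = 0`, `0` if `p < 0` or `p > max(0, n)`, and
`[n]!/([p]! [n-p]!)` if `0 ≤ p ≤ n`. -/
def qbinomZ (n p : ℤ) : RatFunc ℂ :=
  if p = 0 then 1
  else if p < 0 ∨ p > max 0 n then 0
  else qfactF n.toNat / (qfactF p.toNat * qfactF (n - p).toNat)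

/-- `F_q(a_1, …, a_p) = ∏_{i=1}^{p-1} qbinom(a_i + a_{i+1} - 1, a_{i+1})`
(`a i` denotes `a_{i+1}`: indices start at `0`). -/
def Fq (p : ℕ) (a : ℕ → ℤ) : RatFunc ℂ :=
  ∏ i ∈ Finset.range (p - 1), qbinomZ (a i + a (i + 1) - 1) (a (i + 1))

/-- The ordinary binomial coefficient with the same conventions on integer arguments:
`C(n, p) = 1` if `p = 0`, `0` if `p < 0` or `p > max(0, n)`, and the usual binomial
coefficient if `0 ≤ p ≤ n`. -/
def binomZ (n p : ℤ) : ℂ :=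
  if p = 0 then 1
  else if p < 0 ∨ p > max 0 n then 0
  else (Nat.choose n.toNat p.toNat : ℂ)

end

/-!
Every factor of `A` is regular at `q₀`, so the value of `A` is the product of the values of its
factors. These are computed by tracking orders of vanishing and leading coefficients at `q₀`: the
`q`-integer `[j]` vanishes to order one if `l ∣ j` (leading coefficient `j q₀⁻¹ / (q₀ - 1)`) and
not at all otherwise, so `[N]!` vanishes to order `⌊N / l⌋` and `qbinom(M, K)` to order
`⌊M / l⌋ - ⌊K / l⌋ - ⌊(M - K) / l⌋ ≥ 0`. Since `q₀ ^ l = 1`, the leading coefficients of `[N]!`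
repeat in blocks of `l`, which gives `qbinom(l s + l t - 1, l t)(q₀) = C(s + t - 1, t)`, while
`qbinom(l s + b - 1, b)` vanishes at `q₀` when `l ∤ b`. If `l ∤ a_1` the prefactor `[n]/[a_1]`
vanishes at `q₀`; otherwise the first `a_{i+1}` not divisible by `l` kills the `i`-th factor.
-/
open Polynomial

theorem Nat.mul_add_div_eq_of_lt {l q r : ℕ} (hr : r < l) : (l * q + r) / l = q := by
  rw [Nat.mul_add_div (by omega), Nat.div_eq_of_lt hr, add_zero]

theorem Nat.exists_lt_and_not_succ {P : ℕ → Prop} (h0 : P 0) {j : ℕ} (hj : ¬ P j) :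
    ∃ i < j, P i ∧ ¬ P (i + 1) := by
  induction j with
  | zero => exact absurd h0 hj
  | succ j ih =>
    by_cases hPj : P j
    · exact ⟨j, j.lt_succ_self, hPj, hj⟩
    · obtain ⟨i, hi, h⟩ := ih hPj
      exact ⟨i, by omega, h⟩

section LocalValues

variable {K : Type*} [Field K]

def HasValueAt (x : K) (f : RatFunc K) (v : K) : Prop :=
  ∃ P Q : K[X], Q.eval x ≠ 0 ∧
    f = algebraMap K[X] (RatFunc K) P / algebraMap K[X] (RatFunc K) Q ∧ v = P.eval x / Q.eval x

namespace HasValueAt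

variable {x : K} {f g : RatFunc K} {v w : K}

theorem algebraMap_polynomial (P : K[X]) :
    HasValueAt x (algebraMap K[X] (RatFunc K) P) (P.eval x) :=
  ⟨P, 1, by simp, by simp, by simp⟩

theorem zero : HasValueAt x 0 0 := by
  simpa using algebraMap_polynomial (x := x) (0 : K[X])

theorem one : HasValueAt x 1 1 := by
  simpa using algebraMap_polynomial (x := x) (1 : K[X])

theorem mul (hf : HasValueAt x f v) (hg : HasValueAt x g w) : HasValueAt x (f * g) (v * w) := by
  obtain ⟨P, Q, hQ, rfl, rfl⟩ := hf
  obtain ⟨P', Q', hQ', rfl, rfl⟩ := hg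
  refine ⟨P * P', Q * Q', by simp [hQ, hQ'], ?_, ?_⟩
  · simp only [map_mul, div_mul_div_comm]
  · simp only [eval_mul, div_mul_div_comm]

theorem inv (hf : HasValueAt x f v) (hv : v ≠ 0) : HasValueAt x f⁻¹ v⁻¹ := by
  obtain ⟨P, Q, hQ, rfl, rfl⟩ := hf
  exact ⟨Q, P, (div_ne_zero_iff.mp hv).1, by rw [inv_div], by rw [inv_div]⟩

theorem div (hf : HasValueAt x f v) (hg : HasValueAt x g w) (hw : w ≠ 0) :
    HasValueAt x (f / g) (v / w) := by
  simpa only [div_eq_mul_inv] using hf.mul (hg.inv hw)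

theorem pow (hf : HasValueAt x f v) (k : ℕ) : HasValueAt x (f ^ k) (v ^ k) := by
  induction k with
  | zero => simpa using one
  | succ k ih => simpa only [pow_succ] using ih.mul hf

theorem prod {ι : Type*} {s : Finset ι} {f : ι → RatFunc K} {v : ι → K}
    (h : ∀ i ∈ s, HasValueAt x (f i) (v i)) : HasValueAt x (∏ i ∈ s, f i) (∏ i ∈ s, v i) := by
  classical
  induction s using Finset.induction_on with
  | empty => simpa using one
  | insert i s hi ih =>
    rw [Finset.prod_insert hi, Finset.prod_insert hi]
    exact (h i (s.mem_insert_self i)).mul (ih fun j hj => h j (Finset.mem_insert_of_mem hj))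

theorem exists_prod {ι : Type*} {s : Finset ι} {f : ι → RatFunc K}
    (h : ∀ i ∈ s, ∃ v, HasValueAt x (f i) v) : ∃ v, HasValueAt x (∏ i ∈ s, f i) v := by
  choose! v hv using h
  exact ⟨_, prod hv⟩

theorem prod_of_mem_of_eq_zero {ι : Type*} [DecidableEq ι] {s : Finset ι} {f : ι → RatFunc K}
    {i : ι} (hi : i ∈ s) (h : ∀ j ∈ s, ∃ v, HasValueAt x (f j) v) (hfi : HasValueAt x (f i) 0) :
    HasValueAt x (∏ j ∈ s, f j) 0 := by
  obtain ⟨w, hw⟩ := exists_prod (s := s.erase i) fun j hj => h j (Finset.mem_of_mem_erase hj)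
  simpa only [Finset.mul_prod_erase s f hi, zero_mul] using hfi.mul hw

theorem eval_denom_ne_zero_and_eval_eq (hf : HasValueAt x f v) :
    f.denom.eval x ≠ 0 ∧ f.eval (RingHom.id K) x = v := by
  obtain ⟨P, Q, hQ, hf, rfl⟩ := hf
  have hQ' : algebraMap K[X] (RatFunc K) Q ≠ 0 :=
    RatFunc.algebraMap_ne_zero fun h => hQ (by simp [h])
  have hden : f.denom.eval x ≠ 0 := by
    obtain ⟨R, hR⟩ := (RatFunc.denom_dvd (fun h => hQ (by simp [h]))).mpr ⟨P, hf⟩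
    intro h
    exact hQ (by rw [hR, eval_mul, h, zero_mul])
  refine ⟨hden, ?_⟩
  have key := RatFunc.eval_mul (RingHom.id K) x (y := algebraMap K[X] (RatFunc K) Q) hden
    (by simp)
  rw [hf, div_mul_cancel₀ _ hQ', RatFunc.eval_algebraMap, RatFunc.eval_algebraMap] at key
  rw [hf, eq_div_iff hQ]
  simpa using key.symm

end HasValueAt

theorem HasValueAt.X_sub_C (x : K) :
    HasValueAt x (algebraMap K[X] (RatFunc K) (X - C x)) 0 := by
  have h := HasValueAt.algebraMap_polynomial (x := x) (X - C x)
  rwa [eval_sub, eval_X, eval_C, sub_self] at h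

theorem algebraMap_X_sub_C_ne_zero (x : K) : algebraMap K[X] (RatFunc K) (X - C x) ≠ 0 :=
  RatFunc.algebraMap_ne_zero (X_sub_C_ne_zero x)

def HasOrderAt (x : K) (f : RatFunc K) (d : ℤ) (v : K) : Prop :=
  v ≠ 0 ∧ HasValueAt x (f / algebraMap K[X] (RatFunc K) (X - C x) ^ d) v

theorem HasValueAt.hasOrderAt {x : K} {f : RatFunc K} {v : K} (hf : HasValueAt x f v)
    (hv : v ≠ 0) : HasOrderAt x f 0 v :=
  ⟨hv, by simpa using hf⟩

namespace HasOrderAt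

variable {x : K} {f g : RatFunc K} {d e : ℤ} {v w : K}

theorem of_eq_mul (hfg : f = algebraMap K[X] (RatFunc K) (X - C x) ^ d * g)
    (hg : HasValueAt x g v) (hv : v ≠ 0) : HasOrderAt x f d v := by
  refine ⟨hv, ?_⟩
  rwa [hfg, mul_div_cancel_left₀ _ (zpow_ne_zero d (algebraMap_X_sub_C_ne_zero x))]

theorem mul (hf : HasOrderAt x f d v) (hg : HasOrderAt x g e w) :
    HasOrderAt x (f * g) (d + e) (v * w) := by
  refine ⟨mul_ne_zero hf.1 hg.1, ?_⟩
  convert hf.2.mul hg.2 using 1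
  rw [zpow_add₀ (algebraMap_X_sub_C_ne_zero x)]
  ring

theorem div (hf : HasOrderAt x f d v) (hg : HasOrderAt x g e w) :
    HasOrderAt x (f / g) (d - e) (v / w) := by
  refine ⟨div_ne_zero hf.1 hg.1, ?_⟩
  convert hf.2.div hg.2 hg.1 using 1
  rw [zpow_sub₀ (algebraMap_X_sub_C_ne_zero x)]
  ring

theorem prod {ι : Type*} {s : Finset ι} {f : ι → RatFunc K} {d : ι → ℤ} {v : ι → K}
    (h : ∀ i ∈ s, HasOrderAt x (f i) (d i) (v i)) :
    HasOrderAt x (∏ i ∈ s, f i) (∑ i ∈ s, d i) (∏ i ∈ s, v i) := by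
  classical
  induction s using Finset.induction_on with
  | empty => simpa using HasValueAt.one.hasOrderAt one_ne_zero
  | insert i s hi ih =>
    rw [Finset.prod_insert hi, Finset.sum_insert hi, Finset.prod_insert hi]
    exact (h i (s.mem_insert_self i)).mul (ih fun j hj => h j (Finset.mem_insert_of_mem hj))

theorem hasValueAt (hf : HasOrderAt x f d v) (hd : 0 ≤ d) :
    HasValueAt x f (if d = 0 then v else 0) := by
  lift d to ℕ using hd
  have key := ((HasValueAt.X_sub_C x).pow d).mul hf.2
  rw [zpow_natCast, mul_div_cancel₀ _ (pow_ne_zero d (algebraMap_X_sub_C_ne_zero x))] at key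
  rcases eq_or_ne d 0 with rfl | hd
  · simpa using key
  · simpa [hd, zero_pow hd] using key

end HasOrderAt

theorem hasOrderAt_of_isRoot {x : K} {P : K[X]} (hP : P.IsRoot x)
    (hP' : P.derivative.eval x ≠ 0) :
    HasOrderAt x (algebraMap K[X] (RatFunc K) P) 1 (P.derivative.eval x) := by
  have hquot : (P /ₘ (X - C x)).eval x = P.derivative.eval x := by
    simpa using
      congrArg (eval x) (divByMonic_add_X_sub_C_mul_derivative_divByMonic_eq_derivative P x)
  refine .of_eq_mul (g := algebraMap K[X] (RatFunc K) (P /ₘ (X - C x))) ?_ ?_ hP'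
  · rw [zpow_one, ← map_mul, mul_divByMonic_eq_iff_isRoot.mpr hP]
  · rw [← hquot]
    exact HasValueAt.algebraMap_polynomial _

end LocalValues

section PowSubOne

variable {K : Type*} [Field K] {x : K}

theorem RatFunc.X_pow_sub_one (k : ℕ) :
    (X : RatFunc K) ^ (k : ℤ) - 1 = algebraMap K[X] (RatFunc K) (Polynomial.X ^ k - 1) := by
  simp only [zpow_natCast, map_sub, map_one, map_pow, algebraMap_X]

theorem RatFunc.X_zpow_neg_sub_one (k : ℕ) :
    (X : RatFunc K) ^ (-(k : ℤ)) - 1 =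
      algebraMap K[X] (RatFunc K) (Polynomial.X ^ k - 1) /
        algebraMap K[X] (RatFunc K) (-Polynomial.X ^ k) := by
  have hX : (X : RatFunc K) ^ k ≠ 0 := pow_ne_zero k X_ne_zero
  simp only [zpow_neg, zpow_natCast, map_sub, map_neg, map_one, map_pow, algebraMap_X]
  field_simp
  ring

theorem hasValueAt_X_zpow_sub_one (hx : x ≠ 0) (m : ℤ) :
    HasValueAt x (RatFunc.X ^ m - 1) (x ^ m - 1) := by
  obtain ⟨k, rfl | rfl⟩ := m.eq_nat_or_neg
  · rw [RatFunc.X_pow_sub_one]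
    have h := HasValueAt.algebraMap_polynomial (x := x) (X ^ k - 1 : K[X])
    rwa [eval_sub, eval_pow, eval_X, eval_one, ← zpow_natCast] at h
  · have hxk : -x ^ k ≠ 0 := neg_ne_zero.mpr (pow_ne_zero k hx)
    rw [RatFunc.X_zpow_neg_sub_one]
    convert (HasValueAt.algebraMap_polynomial (x := x) (X ^ k - 1 : K[X])).div
      (HasValueAt.algebraMap_polynomial (-X ^ k : K[X])) (by simpa using hxk) using 1
    simp only [eval_sub, eval_neg, eval_one, eval_pow, eval_X, zpow_neg, zpow_natCast]
    field_simp
    ring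

theorem hasOrderAt_X_pow_sub_one {k : ℕ} (hxk : x ^ k = 1) (hk : (k : K) ≠ 0) :
    HasOrderAt x (algebraMap K[X] (RatFunc K) (X ^ k - 1)) 1 (k * x⁻¹) := by
  have hk0 : k ≠ 0 := by rintro rfl; simp at hk
  have hx : x ≠ 0 := by rintro rfl; simp [hk0] at hxk
  have hder : (X ^ k - 1 : K[X]).derivative.eval x = k * x⁻¹ := by
    simp [derivative_X_pow, pow_sub₀ x hx (Nat.one_le_iff_ne_zero.mpr hk0), hxk]
  rw [← hder]
  exact hasOrderAt_of_isRoot (by simp [hxk]) (by rw [hder]; exact mul_ne_zero hk (inv_ne_zero hx))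

theorem hasOrderAt_X_zpow_sub_one {m : ℤ} (hxm : x ^ m = 1) (hm : (m : K) ≠ 0) :
    HasOrderAt x (RatFunc.X ^ m - 1) 1 (m * x⁻¹) := by
  obtain ⟨k, rfl | rfl⟩ := m.eq_nat_or_neg
  · rw [RatFunc.X_pow_sub_one]
    simpa using hasOrderAt_X_pow_sub_one (x := x) (k := k) (by simpa using hxm) (by simpa using hm)
  · have hxk : x ^ k = 1 := by simpa using hxm
    have hnum := hasOrderAt_X_pow_sub_one hxk (by simpa using hm)
    have hden := (HasValueAt.algebraMap_polynomial (x := x) (-X ^ k : K[X])).hasOrderAt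
      (by simp [hxk])
    rw [RatFunc.X_zpow_neg_sub_one]
    convert hnum.div hden using 1
    · norm_num
    rw [eval_neg, eval_pow, eval_X, hxk]
    push_cast
    ring

theorem hasOrderAt_X_sub_one (hx : x ≠ 1) : HasOrderAt x (RatFunc.X - 1) 0 (x - 1) := by
  have h := HasValueAt.algebraMap_polynomial (x := x) (X - 1 : K[X])
  rw [map_sub, map_one, RatFunc.algebraMap_X, eval_sub, eval_X, eval_one] at h
  exact h.hasOrderAt (sub_ne_zero.mpr hx)

end PowSubOne

section RootOfUnity

variable {l : ℕ} {q₀ : ℂ}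

noncomputable def qintLeadingCoeff (l : ℕ) (q₀ : ℂ) (j : ℕ) : ℂ :=
  if l ∣ j then j * q₀⁻¹ / (q₀ - 1) else (q₀ ^ j - 1) / (q₀ - 1)

noncomputable def qfactLeadingCoeff (l : ℕ) (q₀ : ℂ) (N : ℕ) : ℂ :=
  ∏ k ∈ Finset.range N, qintLeadingCoeff l q₀ (k + 1)

theorem hasOrderAt_qintZ (hl : 0 < l) (hprim : IsPrimitiveRoot q₀ l) (hq₀ : q₀ ≠ 1) {j : ℕ}
    (hj : 0 < j) : HasOrderAt q₀ (qintZ j) (if l ∣ j then 1 else 0) (qintLeadingCoeff l q₀ j) := by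
  unfold qintZ qintLeadingCoeff
  split_ifs with h
  · have hpow : q₀ ^ (j : ℤ) = 1 := by simpa using (hprim.pow_eq_one_iff_dvd j).mpr h
    simpa using (hasOrderAt_X_zpow_sub_one hpow (by exact_mod_cast hj.ne')).div
      (hasOrderAt_X_sub_one hq₀)
  · have hpow : q₀ ^ (j : ℤ) - 1 ≠ 0 := by
      simpa [sub_eq_zero] using mt (hprim.pow_eq_one_iff_dvd j).mp h
    simpa using ((hasValueAt_X_zpow_sub_one (hprim.ne_zero hl.ne') j).hasOrderAt hpow).div
      (hasOrderAt_X_sub_one hq₀)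

theorem hasValueAt_qintZ_div_qintZ (hl : 0 < l) (hprim : IsPrimitiveRoot q₀ l) {n a : ℤ}
    (hn : (l : ℤ) ∣ n) (ha : a ≠ 0) :
    HasValueAt q₀ (qintZ n / qintZ a) (if (l : ℤ) ∣ a then n / a else 0) := by
  have hq0 : q₀ ≠ 0 := hprim.ne_zero hl.ne'
  have hX : (RatFunc.X - 1 : RatFunc ℂ) ≠ 0 := by simpa using algebraMap_X_sub_C_ne_zero (1 : ℂ)
  rw [qintZ, qintZ, div_div_div_cancel_right₀ hX]
  split_ifs with h
  · rcases eq_or_ne n 0 with rfl | hn0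
    · simpa using HasValueAt.zero
    have key := (hasOrderAt_X_zpow_sub_one ((hprim.zpow_eq_one_iff_dvd n).mpr hn)
      (by exact_mod_cast hn0)).div
      (hasOrderAt_X_zpow_sub_one ((hprim.zpow_eq_one_iff_dvd a).mpr h) (by exact_mod_cast ha))
    have ha' : (a : ℂ) ≠ 0 := by exact_mod_cast ha
    convert key.hasValueAt le_rfl using 1
    rw [if_pos (sub_self 1)]
    field_simp
  · have hpow : q₀ ^ a - 1 ≠ 0 := sub_ne_zero.mpr (mt (hprim.zpow_eq_one_iff_dvd a).mp h)
    simpa [(hprim.zpow_eq_one_iff_dvd n).mpr hn] using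
      (hasValueAt_X_zpow_sub_one hq0 n).div (hasValueAt_X_zpow_sub_one hq0 a) hpow

theorem hasOrderAt_qfactF (hl : 0 < l) (hprim : IsPrimitiveRoot q₀ l) (hq₀ : q₀ ≠ 1) (N : ℕ) :
    HasOrderAt q₀ (qfactF N) (N / l : ℕ) (qfactLeadingCoeff l q₀ N) := by
  have key := HasOrderAt.prod fun k (_ : k ∈ Finset.range N) =>
    hasOrderAt_qintZ hl hprim hq₀ (Nat.succ_pos k)
  rw [Finset.sum_boole, Nat.cast_inj.mpr (Nat.card_multiples N l)] at key
  simpa [qfactF, qfactLeadingCoeff] using key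

theorem hasValueAt_qfactF_div (hl : 0 < l) (hprim : IsPrimitiveRoot q₀ l) (hq₀ : q₀ ≠ 1)
    {M K : ℕ} (hKM : K ≤ M) :
    HasValueAt q₀ (qfactF M / (qfactF K * qfactF (M - K)))
      (if M / l = K / l + (M - K) / l then
        qfactLeadingCoeff l q₀ M / (qfactLeadingCoeff l q₀ K * qfactLeadingCoeff l q₀ (M - K))
      else 0) := by
  have key := (hasOrderAt_qfactF hl hprim hq₀ M).div
    ((hasOrderAt_qfactF hl hprim hq₀ K).mul (hasOrderAt_qfactF hl hprim hq₀ (M - K)))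
  have hle : K / l + (M - K) / l ≤ M / l := by
    simpa [Nat.add_sub_cancel' hKM] using Nat.div_add_div_le_add_div (x := K) (y := M - K) (z := l)
  convert key.hasValueAt (by omega) using 2
  omega

theorem qfactLeadingCoeff_mul_add (hprim : IsPrimitiveRoot q₀ l) (s : ℕ) {r : ℕ} (hr : r < l) :
    qfactLeadingCoeff l q₀ (l * s + r) =
      qfactLeadingCoeff l q₀ (l * s) * qfactLeadingCoeff l q₀ r := by
  simp only [qfactLeadingCoeff, Finset.prod_range_add]
  congr 1
  refine Finset.prod_congr rfl fun k hk => ?_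
  have hndvd : ¬ l ∣ k + 1 :=
    Nat.not_dvd_of_pos_of_lt k.succ_pos (by have := Finset.mem_range.mp hk; omega)
  rw [qintLeadingCoeff, qintLeadingCoeff, if_neg hndvd, if_neg, add_assoc, pow_add, pow_mul,
    hprim.pow_eq_one, one_pow, one_mul]
  rwa [add_assoc, Nat.dvd_add_right (dvd_mul_right l s)]

theorem qfactLeadingCoeff_mul (hl : 0 < l) (hprim : IsPrimitiveRoot q₀ l) (s : ℕ) :
    qfactLeadingCoeff l q₀ (l * s) =
      s.factorial * (qfactLeadingCoeff l q₀ (l - 1) * (l * q₀⁻¹ / (q₀ - 1))) ^ s := by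
  induction s with
  | zero => simp [qfactLeadingCoeff]
  | succ s ih =>
    have hidx : l * (s + 1) = l * s + (l - 1) + 1 := by rw [mul_add]; omega
    rw [hidx, qfactLeadingCoeff, Finset.prod_range_succ, ← qfactLeadingCoeff,
      qfactLeadingCoeff_mul_add hprim s (by omega), ih, ← hidx, qintLeadingCoeff,
      if_pos (dvd_mul_right l _), Nat.factorial_succ]
    push_cast
    ring

theorem qfactLeadingCoeff_div_eq_choose (hl : 0 < l) (hprim : IsPrimitiveRoot q₀ l)
    (hq₀ : q₀ ≠ 1) (s t : ℕ) :
    qfactLeadingCoeff l q₀ (l * (s + t) + (l - 1)) /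
        (qfactLeadingCoeff l q₀ (l * t) * qfactLeadingCoeff l q₀ (l * s + (l - 1))) =
      (s + t).choose t := by
  have h1 : qfactLeadingCoeff l q₀ (l - 1) ≠ 0 := (hasOrderAt_qfactF hl hprim hq₀ _).1
  have h2 : (l : ℂ) ≠ 0 := by exact_mod_cast hl.ne'
  have h3 : q₀ ≠ 0 := hprim.ne_zero hl.ne'
  have h4 : q₀ - 1 ≠ 0 := sub_ne_zero.mpr hq₀
  rw [qfactLeadingCoeff_mul_add hprim _ (by omega), qfactLeadingCoeff_mul_add hprim _ (by omega),
    qfactLeadingCoeff_mul hl hprim, qfactLeadingCoeff_mul hl hprim, qfactLeadingCoeff_mul hl hprim,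
    add_comm s t, Nat.cast_add_choose]
  field_simp
  ring

end RootOfUnity

section QBinomial

variable {l : ℕ} {q₀ : ℂ}

theorem qbinomZ_eq_qfactF_div {M K : ℤ} (hK : 0 < K) (hKM : K ≤ M) :
    qbinomZ M K = qfactF M.toNat / (qfactF K.toNat * qfactF (M.toNat - K.toNat)) := by
  rw [qbinomZ, if_neg hK.ne', if_neg (by omega), show (M - K).toNat = M.toNat - K.toNat by omega]

theorem qbinomZ_eq_zero {M K : ℤ} (h : K < 0 ∨ K > max 0 M) : qbinomZ M K = 0 := by
  rw [qbinomZ, if_neg (by omega), if_pos h]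

theorem exists_hasValueAt_qbinomZ (hl : 0 < l) (hprim : IsPrimitiveRoot q₀ l) (hq₀ : q₀ ≠ 1)
    (M K : ℤ) : ∃ v, HasValueAt q₀ (qbinomZ M K) v := by
  rcases eq_or_ne K 0 with rfl | hK0
  · exact ⟨1, by simpa [qbinomZ] using HasValueAt.one⟩
  by_cases h : K < 0 ∨ K > max 0 M
  · exact ⟨0, by simpa [qbinomZ_eq_zero h] using HasValueAt.zero⟩
  rw [qbinomZ_eq_qfactF_div (by omega) (by omega)]
  exact ⟨_, hasValueAt_qfactF_div hl hprim hq₀ (by omega)⟩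

theorem hasValueAt_qbinomZ_mul (hl : 0 < l) (hprim : IsPrimitiveRoot q₀ l) (hq₀ : q₀ ≠ 1)
    (s t : ℤ) : HasValueAt q₀ (qbinomZ (l * s + l * t - 1) (l * t)) (binomZ (s + t - 1) t) := by
  have hl' : (0 : ℤ) < l := by exact_mod_cast hl
  rcases lt_trichotomy t 0 with ht | rfl | ht
  · have hlt : l * t < 0 := mul_neg_of_pos_of_neg hl' ht
    rw [qbinomZ_eq_zero (Or.inl hlt), binomZ, if_neg ht.ne, if_pos (Or.inl ht)]
    exact HasValueAt.zero
  · simpa [qbinomZ, binomZ] using HasValueAt.one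
  rcases le_or_gt s 0 with hs | hs
  · have hlt : 0 < l * t := mul_pos hl' ht
    have hls : l * s ≤ 0 := mul_nonpos_of_nonneg_of_nonpos hl'.le hs
    rw [qbinomZ_eq_zero (Or.inr (by omega)), binomZ, if_neg ht.ne', if_pos (Or.inr (by omega))]
    exact HasValueAt.zero
  obtain ⟨s, rfl⟩ : ∃ s' : ℕ, s = s' + 1 := ⟨(s - 1).toNat, by omega⟩
  lift t to ℕ using ht.le
  have hM : (l * (s + 1 : ℤ) + l * t - 1).toNat = l * s + l * t + (l - 1) := by
    rw [show (l * (s + 1 : ℤ) + l * t - 1) = ((l * s + l * t + (l - 1) : ℕ) : ℤ) by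
      push_cast [Nat.cast_sub hl]; ring]
    exact Int.toNat_natCast _
  have hK : (l * (t : ℤ)).toNat = l * t := by exact_mod_cast Int.toNat_natCast (l * t)
  rw [qbinomZ_eq_qfactF_div (by positivity) (by nlinarith), hM, hK]
  convert hasValueAt_qfactF_div hl hprim hq₀ (M := l * s + l * t + (l - 1)) (K := l * t)
    (by omega) using 1
  rw [show l * s + l * t + (l - 1) - l * t = l * s + (l - 1) by omega, ← mul_add,
    Nat.mul_add_div_eq_of_lt (by omega), Nat.mul_add_div_eq_of_lt (by omega),
    Nat.mul_div_cancel_left t hl, if_pos (add_comm s t),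
    qfactLeadingCoeff_div_eq_choose hl hprim hq₀, binomZ, if_neg (by exact_mod_cast ht.ne'),
    if_neg (by omega)]
  congr 2
  omega

theorem hasValueAt_qbinomZ_of_not_dvd (hl : 0 < l) (hprim : IsPrimitiveRoot q₀ l)
    (hq₀ : q₀ ≠ 1) (s b : ℤ) (hb : ¬ (l : ℤ) ∣ b) :
    HasValueAt q₀ (qbinomZ (l * s + b - 1) b) 0 := by
  have hl' : (0 : ℤ) < l := by exact_mod_cast hl
  have hb0 : b ≠ 0 := by rintro rfl; exact hb (dvd_zero _)
  by_cases h : b < 0 ∨ b > max 0 (l * s + b - 1)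
  · rw [qbinomZ_eq_zero h]
    exact HasValueAt.zero
  have hs : 0 < s := pos_of_mul_pos_right (show 0 < (l : ℤ) * s by omega) hl'.le
  obtain ⟨s, rfl⟩ : ∃ s' : ℕ, s = s' + 1 := ⟨(s - 1).toNat, by omega⟩
  lift b to ℕ using (by omega)
  have hb : ¬ l ∣ b := by exact_mod_cast hb
  obtain ⟨u, r, rfl, hr0, hrl⟩ : ∃ u r, b = l * u + r ∧ 0 < r ∧ r < l :=
    ⟨b / l, b % l, (Nat.div_add_mod b l).symm, Nat.pos_of_ne_zero (mt Nat.dvd_of_mod_eq_zero hb),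
      Nat.mod_lt b hl⟩
  have hM : (l * (s + 1 : ℤ) + ((l * u + r : ℕ) : ℤ) - 1).toNat = l * (s + u + 1) + (r - 1) := by
    rw [show l * (s + 1 : ℤ) + ((l * u + r : ℕ) : ℤ) - 1 = ((l * (s + u + 1) + (r - 1) : ℕ) : ℤ) by
      push_cast [Nat.cast_sub hr0]; ring]
    exact Int.toNat_natCast _
  rw [qbinomZ_eq_qfactF_div (by omega) (by omega), hM, Int.toNat_natCast]
  convert hasValueAt_qfactF_div hl hprim hq₀ (M := l * (s + u + 1) + (r - 1)) (K := l * u + r)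
    (by nlinarith) using 1
  -- `qfactF M` vanishes to order `s + u + 1`, the denominator only to order `u + s`
  rw [show l * (s + u + 1) + (r - 1) - (l * u + r) = l * s + (l - 1) by
      rw [mul_add, mul_add]; omega,
    Nat.mul_add_div_eq_of_lt (by omega), Nat.mul_add_div_eq_of_lt hrl,
    Nat.mul_add_div_eq_of_lt (by omega), if_neg (by omega)]

end QBinomial

section Fq

variable {l : ℕ} {q₀ : ℂ}

theorem hasValueAt_qintZ_div_mul_Fq_of_forall_dvd (hl : 0 < l) (hprim : IsPrimitiveRoot q₀ l)
    (hq₀ : q₀ ≠ 1) {p : ℕ} (hp : 0 < p) {a : ℕ → ℤ} (ha : 0 < a 0)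
    (hdvd : ∀ i < p, (l : ℤ) ∣ a i) {n n' : ℤ} (hn' : n = l * n') :
    HasValueAt q₀ (qintZ n / qintZ (a 0) * Fq p a)
      (n' / (a 0 / l : ℤ) * ∏ i ∈ Finset.range (p - 1),
        binomZ (a i / l + a (i + 1) / l - 1) (a (i + 1) / l)) := by
  have hl' : (l : ℤ) ≠ 0 := by exact_mod_cast hl.ne'
  refine HasValueAt.mul ?_ (HasValueAt.prod fun i hi => ?_)
  · obtain ⟨s, hs⟩ := hdvd 0 hp
    have hs0 : (s : ℂ) ≠ 0 := by rintro h; simp_all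
    have hlC : (l : ℂ) ≠ 0 := by exact_mod_cast hl.ne'
    convert hasValueAt_qintZ_div_qintZ hl hprim ⟨n', hn'⟩ ha.ne' using 1
    rw [if_pos (hdvd 0 hp), hn', hs, Int.mul_ediv_cancel_left _ hl']
    push_cast
    field_simp
  · have hi := Finset.mem_range.mp hi
    obtain ⟨s, hs⟩ := hdvd i (by omega)
    obtain ⟨t, ht⟩ := hdvd (i + 1) (by omega)
    rw [hs, ht, Int.mul_ediv_cancel_left _ hl', Int.mul_ediv_cancel_left _ hl']
    exact hasValueAt_qbinomZ_mul hl hprim hq₀ s t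

theorem hasValueAt_qintZ_div_mul_Fq_of_not_dvd (hl : 0 < l) (hprim : IsPrimitiveRoot q₀ l)
    (hq₀ : q₀ ≠ 1) {p : ℕ} {a : ℕ → ℤ} (ha : 0 < a 0) {j : ℕ} (hj : j < p)
    (hndvd : ¬ (l : ℤ) ∣ a j) {n : ℤ} (hn : (l : ℤ) ∣ n) :
    HasValueAt q₀ (qintZ n / qintZ (a 0) * Fq p a) 0 := by
  have hreg : ∀ i ∈ Finset.range (p - 1),
      ∃ v, HasValueAt q₀ (qbinomZ (a i + a (i + 1) - 1) (a (i + 1))) v :=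
    fun i _ => exists_hasValueAt_qbinomZ hl hprim hq₀ _ _
  have hquot := hasValueAt_qintZ_div_qintZ hl hprim hn ha.ne'
  rw [Fq]
  by_cases h0 : (l : ℤ) ∣ a 0
  · obtain ⟨i, hij, ⟨s, hs⟩, hi⟩ :=
      Nat.exists_lt_and_not_succ (P := fun i => (l : ℤ) ∣ a i) h0 hndvd
    have hzero : HasValueAt q₀ (qbinomZ (a i + a (i + 1) - 1) (a (i + 1))) 0 := by
      rw [hs]
      exact hasValueAt_qbinomZ_of_not_dvd hl hprim hq₀ s _ hi
    simpa using hquot.mul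
      (HasValueAt.prod_of_mem_of_eq_zero (Finset.mem_range.mpr (by omega)) hreg hzero)
  · rw [if_neg h0] at hquot
    obtain ⟨v, hv⟩ := HasValueAt.exists_prod hreg
    simpa using hquot.mul hv

end Fq

theorem eval_qint_ratio_mul_Fq_at_root_of_unity_general
    (l : ℕ) (q₀ : ℂ) (hq₀ : q₀ ≠ 1) (hprim : IsPrimitiveRoot q₀ l)
    (p : ℕ) (hp : 0 < p) (a : ℕ → ℤ) (ha : 0 < a 0)
    (n n' : ℤ) (hn' : n = l * n') :
    let A : RatFunc ℂ := qintZ n / qintZ (a 0) * Fq p a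
    A.denom.eval q₀ ≠ 0 ∧
      RatFunc.eval (RingHom.id ℂ) q₀ A =
        (if ∃ i, i < p ∧ ¬ (l : ℤ) ∣ a i then 0
         else ((n' : ℂ) / (a 0 / l : ℤ)) *
           ∏ i ∈ Finset.range (p - 1),
             binomZ (a i / l + a (i + 1) / l - 1) (a (i + 1) / l)) := by
  intro A
  refine HasValueAt.eval_denom_ne_zero_and_eval_eq ?_
  split_ifs with hex
  · obtain ⟨j, hj, hndvd⟩ := hex
    rcases Nat.eq_zero_or_pos l with rfl | hl
    · have hA : A = 0 := by simp [A, hn', qintZ]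
      exact hA ▸ HasValueAt.zero
    · exact hasValueAt_qintZ_div_mul_Fq_of_not_dvd hl hprim hq₀ ha hj hndvd ⟨n', hn'⟩
  · push Not at hex
    have hl : 0 < l := Nat.pos_of_ne_zero fun h => by simpa [h, ha.ne'] using hex 0 hp
    exact hasValueAt_qintZ_div_mul_Fq_of_forall_dvd hl hprim hq₀ hp ha hex hn'

/-- Let `q₀ ≠ 1` be a primitive `l`-th root of unity, `p` a positive integer, and
`a_1, …, a_p` integers with `a_1 > 0` and `a_1 + ⋯ + a_p = n = l·n'`. Then
`A = ([n]/[a_1])·F_q(a_1, …, a_p) ∈ ℂ(q)` is regular at `q₀` (the denominator of its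
reduced form does not vanish at `q₀`), and its value at `q₀` is `0` if some `a_i` is not
divisible by `l`, and `(n'/a_1')·∏_{i=1}^{p-1} C(a_i' + a_{i+1}' - 1, a_{i+1}')` if all
`a_i = l·a_i'` are divisible by `l`. -/
theorem eval_qint_ratio_mul_Fq_at_root_of_unity
    (l : ℕ) (q₀ : ℂ) (hq₀ : q₀ ≠ 1) (hprim : IsPrimitiveRoot q₀ l)
    (p : ℕ) (hp : 0 < p) (a : ℕ → ℤ) (ha : 0 < a 0)
    (n n' : ℤ) (hn : n = ∑ i ∈ Finset.range p, a i) (hn' : n = l * n') :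
    let A : RatFunc ℂ := qintZ n / qintZ (a 0) * Fq p a
    A.denom.eval q₀ ≠ 0 ∧
      RatFunc.eval (RingHom.id ℂ) q₀ A =
        (if ∃ i, i < p ∧ ¬ (l : ℤ) ∣ a i then 0
         else ((n' : ℂ) / (a 0 / l : ℤ)) *
           ∏ i ∈ Finset.range (p - 1),
             binomZ (a i / l + a (i + 1) / l - 1) (a (i + 1) / l)) :=
  eval_qint_ratio_mul_Fq_at_root_of_unity_general l q₀ hq₀ hprim p hp a ha n n' hn'
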